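/- arXiv:1801.06250 — 3 statements merged into one kernel-verified Lean document; each statement's English description precedes it below -/
import Mathlib

section
/- For a set of weights w = (q_0, ..., q_n) and a nonzero integer tuple x = (x_0, ..., x_n), if d = wgcd(x) is the weighted greatest common divisor, then the tuple y with y_i = x_i / d^{q_i} is integral and has weighted greatest common divisor equal to 1. -/
/-- If `d` is the weighted gcd of a nonzero integer tuple `x` (the greatest positive
integer with `d^(q i) ∣ x i` for all `i`), then the tuple `y` with `x i = d^(q i) * y i`
is integral (it exists in `ℤ`) and has weighted gcd equal to `1`. -/
theorem stmt_0 {n : ℕ} (q : Fin (n + 1) → ℕ) (hq : ∀ i, 0 < q i)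
    (x : Fin (n + 1) → ℤ) (hx : x ≠ 0) (d : ℕ)
    (hd : IsGreatest {e : ℕ | 0 < e ∧ ∀ i, (e : ℤ) ^ (q i) ∣ x i} d) :
    ∃ y : Fin (n + 1) → ℤ,
      (∀ i, x i = (d : ℤ) ^ (q i) * y i) ∧
      IsGreatest {e : ℕ | 0 < e ∧ ∀ i, (e : ℤ) ^ (q i) ∣ y i} 1 := by
  obtain ⟨⟨hdpos, hdvd⟩, hmax⟩ := hd
  choose y hy using hdvd
  refine ⟨y, hy, ⟨one_pos, fun i => by simp⟩, ?_⟩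
  rintro e ⟨hepos, hevd⟩
  have hmem : e * d ∈ {e : ℕ | 0 < e ∧ ∀ i, (e : ℤ) ^ (q i) ∣ x i} := by
    refine ⟨Nat.mul_pos hepos hdpos, fun i => ?_⟩
    rw [hy i]
    push_cast
    rw [mul_pow, mul_comm ((e:ℤ) ^ q i)]
    exact mul_dvd_mul dvd_rfl (hevd i)
  have h := hmax hmem
  nlinarith [hdpos, hepos, h]
end

section
/- Let x and y be normalized nonzero integer tuples with weights (q_0, ..., q_n) representing the same point in weighted projective space over Q (i.e., y = λ ⋆ x for some nonzero rational λ). Then max_i |y_i|^{1/q_i} = max_i |x_i|^{1/q_i}, i.e., the weighted height is well-defined on normalized representatives. -/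
/-- The weighted height is well defined on normalized representatives: if two nonzero
normalized integer tuples represent the same point of weighted projective space over ℚ,
then they have the same weighted height `max_i |x i|^(1/q i)`. -/
theorem stmt_12 {n : ℕ} (q : Fin (n + 1) → ℕ) (hq : ∀ i, 0 < q i)
    (x y : Fin (n + 1) → ℤ) (hx : x ≠ 0) (hy : y ≠ 0)
    (hxnorm : IsGreatest {d : ℕ | 0 < d ∧ ∀ i, (d : ℤ) ^ (q i) ∣ x i} 1)
    (hynorm : IsGreatest {d : ℕ | 0 < d ∧ ∀ i, (d : ℤ) ^ (q i) ∣ y i} 1)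
    (hrel : ∃ l : ℚ, l ≠ 0 ∧ ∀ i, (y i : ℚ) = l ^ (q i) * (x i : ℚ)) :
    (Finset.univ.sup' Finset.univ_nonempty
        fun i => (|y i| : ℝ) ^ ((1 : ℝ) / (q i : ℝ))) =
    (Finset.univ.sup' Finset.univ_nonempty
        fun i => (|x i| : ℝ) ^ ((1 : ℝ) / (q i : ℝ))) := by
  obtain ⟨l, hl, hrel⟩ := hrel
  have hden : (l.den : ℚ) ≠ 0 := by exact_mod_cast l.den_nz
  -- integer identity
  have hint : ∀ i, y i * (l.den : ℤ) ^ (q i) = l.num ^ (q i) * x i := by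
    intro i
    have h1 : (y i : ℚ) * (l.den : ℚ) ^ (q i) = (l.num : ℚ) ^ (q i) * x i := by
      rw [hrel i]
      have : (l.num : ℚ) = l * l.den := by
        rw [Rat.mul_den_eq_num]
      rw [this, mul_pow]
      ring
    exact_mod_cast h1
  have hcop : IsCoprime (l.den : ℤ) l.num := by
    rw [Int.isCoprime_iff_gcd_eq_one, Int.gcd_comm]
    exact Rat.reduced l
  -- l.den = 1
  have hd1 : l.den = 1 := by
    have : l.den ∈ {d : ℕ | 0 < d ∧ ∀ i, (d : ℤ) ^ (q i) ∣ x i} := by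
      refine ⟨l.pos, fun i => ?_⟩
      have : (l.den : ℤ) ^ (q i) ∣ l.num ^ (q i) * x i := ⟨y i, by linarith [hint i]⟩
      exact (IsCoprime.pow hcop).dvd_of_dvd_mul_left this
    exact le_antisymm (hxnorm.2 this) l.pos
  -- l.num.natAbs = 1
  have hn1 : l.num.natAbs = 1 := by
    have hnum : l.num ≠ 0 := Rat.num_ne_zero.mpr hl
    have : l.num.natAbs ∈ {d : ℕ | 0 < d ∧ ∀ i, (d : ℤ) ^ (q i) ∣ y i} := by
      refine ⟨Int.natAbs_pos.mpr hnum, fun i => ?_⟩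
      have h2 : l.num ^ (q i) ∣ y i := by
        refine ⟨x i, ?_⟩
        have := hint i
        rw [hd1] at this
        simpa using this
      have : ((l.num ^ (q i)).natAbs : ℤ) ∣ y i := Int.natAbs_dvd.mpr h2
      simpa [Int.natAbs_pow] using this
    exact le_antisymm (hynorm.2 this) (Int.natAbs_pos.mpr hnum)
  have key : ∀ i, |y i| = |x i| := by
    intro i
    have := hint i
    rw [hd1] at this
    simp only [Nat.cast_one, one_pow, mul_one] at this
    rw [this, abs_mul, abs_pow, Int.abs_eq_natAbs, hn1]
    simp
  have hfun : (fun i => (|y i| : ℝ) ^ ((1 : ℝ) / (q i : ℝ)))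
      = fun i => (|x i| : ℝ) ^ ((1 : ℝ) / (q i : ℝ)) := by
    funext i
    have h : |((y i : ℝ))| = |((x i : ℝ))| := by exact_mod_cast key i
    rw [h]
  rw [hfun]
end

section
/- The weighted gcd is multiplicative under the star action by positive integers: for a nonzero integer tuple x with weights (q_0,...,q_n) and a positive integer m, wgcd(m ⋆ x) = m · wgcd(x), where m ⋆ x = (m^{q_0}x_0, ..., m^{q_n}x_n), provided gcd over each prime is computed correctly; in particular wgcd(m ⋆ x) ≥ m · wgcd(x). -/
/-- The weighted gcd scales under the star action by a positive integer `m`: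
if `g` is the weighted gcd of `x` and `g'` is the weighted gcd of
`m ⋆ x = (m^(q i) * x i)`, then `m * g ≤ g'`. -/
theorem stmt_16 {n : ℕ} (q : Fin (n + 1) → ℕ) (hq : ∀ i, 0 < q i)
    (x : Fin (n + 1) → ℤ) (hx : x ≠ 0) (m : ℕ) (hm : 0 < m) (g g' : ℕ)
    (hg : IsGreatest {d : ℕ | 0 < d ∧ ∀ i, (d : ℤ) ^ (q i) ∣ x i} g)
    (hg' : IsGreatest {d : ℕ | 0 < d ∧ ∀ i, (d : ℤ) ^ (q i) ∣ (m : ℤ) ^ (q i) * x i} g') :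
    m * g ≤ g' := by
  apply hg'.2
  refine ⟨Nat.mul_pos hm hg.1.1, fun i => ?_⟩
  have := hg.1.2 i
  push_cast
  rw [mul_pow]
  exact mul_dvd_mul_left _ this
end
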